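/- arXiv:2510.07617 — 4 statements merged into one kernel-verified Lean document; each statement's English description precedes it below -/
import Mathlib

section
/- Let X be a set and S a finite subset of the free monoid ⟨X⟩. Then there is exactly one overlap-free subset T ⊆ ⟨X⟩\{1} inverse-equivalent to S, namely the set of nonidentity elements of ⟨X⟩ that become invertible in ⟨X : i(S)⟩ but admit no factorization into two nonidentity elements of ⟨X⟩ that become invertible in ⟨X : i(S)⟩. -/
namespace AdjoinInverses

variable {X : Type*}

/-- The embedding of the free monoid on `X` into the free monoid on `X ⊕ S`. -/
def emb (S : Set (FreeMonoid X)) : FreeMonoid X →* FreeMonoid (X ⊕ S) :=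
  FreeMonoid.map Sum.inl

/-- The generator `i(w)` corresponding to `w ∈ S`. -/
def igen (S : Set (FreeMonoid X)) (w : S) : FreeMonoid (X ⊕ S) :=
  FreeMonoid.of (Sum.inr w)

/-- The defining relations `w ⬝ i(w) = 1` and `i(w) ⬝ w = 1` for `w ∈ S`. -/
inductive InvRel (S : Set (FreeMonoid X)) : FreeMonoid (X ⊕ S) → FreeMonoid (X ⊕ S) → Prop
  | mul_inv (w : S) : InvRel S (emb S w.1 * igen S w) 1
  | inv_mul (w : S) : InvRel S (igen S w * emb S w.1) 1

/-- The congruence generated by the defining relations. -/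
def invCon (S : Set (FreeMonoid X)) : Con (FreeMonoid (X ⊕ S)) := conGen (InvRel S)

/-- The monoid `⟨X : i(S)⟩` obtained from the free monoid on `X` by universally
adjoining a two-sided inverse to each element of `S`. -/
def AdjInv (S : Set (FreeMonoid X)) : Type _ := (invCon S).Quotient

instance (S : Set (FreeMonoid X)) : Monoid (AdjInv S) := Con.monoid _

/-- The natural homomorphism `⟨X⟩ → ⟨X : i(S)⟩`. -/
def natHom (S : Set (FreeMonoid X)) : FreeMonoid X →* AdjInv S :=
  ((invCon S).mk').comp (emb S)

/-- The adjoined inverse `i(w)`, as an element of `⟨X : i(S)⟩`. -/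
def invElt (S : Set (FreeMonoid X)) (w : S) : AdjInv S :=
  (invCon S).mk' (igen S w)

/-- `S` and `S'` are inverse-equivalent: each element of `S'` becomes invertible in
`⟨X : i(S)⟩` and each element of `S` becomes invertible in `⟨X : i(S')⟩`. -/
def InvEquiv (S S' : Set (FreeMonoid X)) : Prop :=
  (∀ w ∈ S', IsUnit (natHom S w)) ∧ ∀ w ∈ S, IsUnit (natHom S' w)

/-- Two (nonidentity) elements of the free monoid overlap: one can be written `a*b`
and the other `b*c` with `b ≠ 1` and at most one of `a`, `c` equal to `1`. -/
def Overlap (u v : FreeMonoid X) : Prop :=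
  ∃ a b c : FreeMonoid X, b ≠ 1 ∧ (a ≠ 1 ∨ c ≠ 1) ∧ u = a * b ∧ v = b * c

/-- A set `T` is overlap-free if no pair of elements of `T` (distinct or not) overlap. -/
def OverlapFree (T : Set (FreeMonoid X)) : Prop :=
  ∀ u ∈ T, ∀ v ∈ T, ¬ Overlap u v

/-!
The words that become invertible in `⟨X : i(S)⟩` form a submonoid `P` of `⟨X⟩` with the
cancellation properties of a group of units (`ab, bc ∈ P ⇒ b ∈ P`, `ab, a ∈ P ⇒ b ∈ P`, ...).
Hence its indecomposable elements `D` are overlap-free and generate `P`, which makes `D`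
inverse-equivalent to `S`.

For uniqueness, the point is that an overlap-free `T` generates exactly the words invertible in
`⟨X : i(T)⟩`; then `T`, being the set of indecomposables of the submonoid it generates, is
recovered from that submonoid, which inverse-equivalence does not change. To see that an
invertible word `w` lies in `⟨T⟩`, let letters act on stacks by pushing them and deleting a
relator `t i(t)` or `i(t) t` whenever one is completed at the top. Because `T` is overlap-free,
relators act trivially on stacks without relators, so this is an action of `⟨X : i(T)⟩`.
Running it on `w` and an inverse of `w` shows that some nonempty prefix of `w` is a suffix of
an element of `T` and some nonempty suffix of `w` is a prefix of one; overlap-freeness and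
induction on the length then split `w` into elements of `T`.
-/

theorem isUnit_of_isUnit_mul_of_isUnit_mul {M : Type*} [Monoid M] {x y z : M}
    (hxy : IsUnit (x * y)) (hyz : IsUnit (y * z)) : IsUnit y :=
  isUnit_iff_exists_and_exists.2
    ⟨⟨z * ↑hyz.unit⁻¹, by rw [← mul_assoc, hyz.mul_val_inv]⟩,
      ⟨↑hxy.unit⁻¹ * x, by rw [mul_assoc, hxy.val_inv_mul]⟩⟩

section Presentation

variable {S : Set (FreeMonoid X)}

theorem natHom_mul_invElt (w : S) : natHom S w * invElt S w = 1 :=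
  (Con.eq _).2 (ConGen.Rel.of _ _ (InvRel.mul_inv w))

theorem invElt_mul_natHom (w : S) : invElt S w * natHom S w = 1 :=
  (Con.eq _).2 (ConGen.Rel.of _ _ (InvRel.inv_mul w))

theorem isUnit_natHom_of_mem {w : FreeMonoid X} (hw : w ∈ S) : IsUnit (natHom S w) :=
  isUnit_iff_exists_and_exists.2
    ⟨⟨_, natHom_mul_invElt ⟨w, hw⟩⟩, ⟨_, invElt_mul_natHom ⟨w, hw⟩⟩⟩

section Lift

variable {M : Type*} [Monoid M] (f : FreeMonoid X →* M) (hf : ∀ w ∈ S, IsUnit (f w))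

noncomputable def liftFree : FreeMonoid (X ⊕ S) →* M :=
  FreeMonoid.lift (Sum.elim (f ∘ FreeMonoid.of) fun w => ↑(hf w.1 w.2).unit⁻¹)

theorem liftFree_emb (w : FreeMonoid X) : liftFree f hf (emb S w) = f w :=
  DFunLike.congr_fun (FreeMonoid.hom_eq (f := (liftFree f hf).comp (emb S)) (g := f)
    fun _ => rfl) w

noncomputable def lift : AdjInv S →* M :=
  (invCon S).lift (liftFree f hf) <| Con.conGen_le.2 fun _ _ h => by
    cases h with
    | mul_inv w =>
      simp only [Con.ker_rel, map_mul, map_one, liftFree_emb]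
      exact (hf w.1 w.2).mul_val_inv
    | inv_mul w =>
      simp only [Con.ker_rel, map_mul, map_one, liftFree_emb]
      exact (hf w.1 w.2).val_inv_mul

theorem lift_natHom (w : FreeMonoid X) : lift f hf (natHom S w) = f w :=
  liftFree_emb f hf w

end Lift

end Presentation

def invertibles (S : Set (FreeMonoid X)) : Submonoid (FreeMonoid X) :=
  (IsUnit.submonoid (AdjInv S)).comap (natHom S)

section Invertibles

variable {S S' : Set (FreeMonoid X)} {a b c : FreeMonoid X}

theorem mem_invertibles : a ∈ invertibles S ↔ IsUnit (natHom S a) := Iff.rfl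

theorem subset_invertibles : S ⊆ invertibles S := fun _ => isUnit_natHom_of_mem

theorem invertibles_mono (h : S ⊆ invertibles S') : invertibles S ≤ invertibles S' :=
  fun w hw => by
    rw [mem_invertibles, ← lift_natHom (natHom S') h w]
    exact hw.map _

theorem invertibles_eq_of_invEquiv (h : InvEquiv S S') : invertibles S = invertibles S' :=
  le_antisymm (invertibles_mono h.2) (invertibles_mono h.1)

theorem mem_invertibles_of_mul_mem_of_mul_mem (hab : a * b ∈ invertibles S)
    (hbc : b * c ∈ invertibles S) : b ∈ invertibles S := by
  rw [mem_invertibles, map_mul] at *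
  exact isUnit_of_isUnit_mul_of_isUnit_mul hab hbc

theorem mem_invertibles_of_mul_mem_left (hab : a * b ∈ invertibles S)
    (ha : a ∈ invertibles S) : b ∈ invertibles S := by
  rw [mem_invertibles, map_mul] at *
  exact ha.mul_left_iff.1 hab

theorem mem_invertibles_of_mul_mem_right (hab : a * b ∈ invertibles S)
    (hb : b ∈ invertibles S) : a ∈ invertibles S := by
  rw [mem_invertibles, map_mul] at *
  exact hb.mul_right_iff.1 hab

end Invertibles

section Indecomposables

variable {M : Type*} [Monoid M] (P : Submonoid M)

def indecomposables : Set M :=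
  {w | w ≠ 1 ∧ w ∈ P ∧ ¬∃ u v, u ≠ 1 ∧ v ≠ 1 ∧ u ∈ P ∧ v ∈ P ∧ w = u * v}

theorem indecomposables_subset : indecomposables P ⊆ P := fun _ hw => hw.2.1

theorem one_notMem_indecomposables : (1 : M) ∉ indecomposables P := fun h => h.1 rfl

end Indecomposables

theorem length_lt_length_mul_left {u v : FreeMonoid X} (hv : v ≠ 1) :
    u.length < (u * v).length := by
  rw [FreeMonoid.length_mul, Nat.lt_add_right_iff_pos, Nat.pos_iff_ne_zero, Ne,
    FreeMonoid.length_eq_zero]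
  exact hv

theorem length_lt_length_mul_right {u v : FreeMonoid X} (hu : u ≠ 1) :
    v.length < (u * v).length := by
  rw [FreeMonoid.length_mul, Nat.lt_add_left_iff_pos, Nat.pos_iff_ne_zero, Ne,
    FreeMonoid.length_eq_zero]
  exact hu

theorem mem_closure_indecomposables (P : Submonoid (FreeMonoid X)) {w : FreeMonoid X}
    (hw : w ∈ P) : w ∈ Submonoid.closure (indecomposables P) := by
  by_cases hw1 : w = 1
  · exact hw1 ▸ one_mem _
  by_cases hdec : ∃ u v, u ≠ 1 ∧ v ≠ 1 ∧ u ∈ P ∧ v ∈ P ∧ w = u * v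
  · obtain ⟨u, v, hu1, hv1, hu, hv, huv⟩ := hdec
    rw [huv]
    exact mul_mem (mem_closure_indecomposables P hu) (mem_closure_indecomposables P hv)
  · exact Submonoid.subset_closure ⟨hw1, hw, hdec⟩
termination_by w.length
decreasing_by
  · exact huv ▸ length_lt_length_mul_left hv1
  · exact huv ▸ length_lt_length_mul_right hu1

theorem overlapFree_indecomposables_invertibles (S : Set (FreeMonoid X)) :
    OverlapFree (indecomposables (invertibles S)) := by
  rintro _ ⟨-, hu, hu_dec⟩ _ ⟨-, hv, hv_dec⟩ ⟨a, b, c, hb1, hac, rfl, rfl⟩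
  have hb := mem_invertibles_of_mul_mem_of_mul_mem hu hv
  rcases hac with ha1 | hc1
  · exact hu_dec ⟨a, b, ha1, hb1, mem_invertibles_of_mul_mem_right hu hb, hb, rfl⟩
  · exact hv_dec ⟨b, c, hb1, hc1, hb, mem_invertibles_of_mul_mem_left hv hb, rfl⟩

section OverlapFree

variable {T : Set (FreeMonoid X)}

theorem exists_mem_mul_of_mem_closure {w : FreeMonoid X} (hw : w ∈ Submonoid.closure T)
    (hw1 : w ≠ 1) : ∃ t ∈ T, ∃ v ∈ Submonoid.closure T, w = t * v := by
  induction hw using Submonoid.closure_induction_left with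
  | one => exact absurd rfl hw1
  | mul_left t ht v hv => exact ⟨t, ht, v, hv, rfl⟩

theorem OverlapFree.mem_of_suffix_of_prefix (hT : OverlapFree T) {σ w γ : FreeMonoid X}
    (hs : σ * w ∈ T) (ht : w * γ ∈ T) (hw : w ≠ 1) : w ∈ T := by
  by_cases hσγ : σ ≠ 1 ∨ γ ≠ 1
  · exact absurd ⟨σ, w, γ, hw, hσγ, rfl, rfl⟩ (hT _ hs _ ht)
  · rw [not_or, not_not, not_not] at hσγ
    simpa [hσγ.1] using hs

theorem OverlapFree.mem_of_suffix_mem_closure (hT : OverlapFree T) {τ : FreeMonoid X}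
    (hτ : τ ∈ Submonoid.closure T) : ∀ {σ}, σ * τ ∈ T → τ ≠ 1 → τ ∈ T := by
  induction hτ using Submonoid.closure_induction_right with
  | one => exact fun _ h => absurd rfl h
  | mul_right x _ t ht ih =>
    intro σ hs hxt
    by_cases ht1 : t = 1
    · subst ht1
      rw [mul_one] at hs hxt ⊢
      exact ih hs hxt
    by_cases hσx : σ * x = 1
    · obtain ⟨rfl, rfl⟩ := mul_eq_one'.1 hσx
      simpa using hs
    · exact absurd ⟨σ * x, t, 1, ht1, Or.inl hσx, (mul_assoc _ _ _).symm, (mul_one t).symm⟩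
        (hT _ hs _ ht)

theorem OverlapFree.mem_of_prefix_mem_closure (hT : OverlapFree T) {α : FreeMonoid X}
    (hα : α ∈ Submonoid.closure T) : ∀ {γ}, α * γ ∈ T → α ≠ 1 → α ∈ T := by
  induction hα using Submonoid.closure_induction_left with
  | one => exact fun _ h => absurd rfl h
  | mul_left t ht x _ ih =>
    intro γ hs htx
    by_cases ht1 : t = 1
    · subst ht1
      rw [one_mul] at hs htx ⊢
      exact ih hs htx
    by_cases hxγ : x * γ = 1
    · obtain ⟨rfl, rfl⟩ := mul_eq_one'.1 hxγ
      simpa using hs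
    · exact absurd ⟨1, t, x * γ, ht1, Or.inr hxγ, (one_mul t).symm, mul_assoc _ _ _⟩
        (hT _ ht _ hs)

theorem OverlapFree.indecomposables_closure (hT : OverlapFree T) (hT1 : (1 : FreeMonoid X) ∉ T) :
    indecomposables (Submonoid.closure T) = T := by
  have ne_one {t} (ht : t ∈ T) : t ≠ 1 := fun h => hT1 (h ▸ ht)
  ext w
  constructor
  · rintro ⟨hw1, hw, hw_dec⟩
    obtain ⟨t, ht, v, hv, rfl⟩ := exists_mem_mul_of_mem_closure hw hw1
    by_cases hv1 : v = 1
    · simpa [hv1] using ht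
    · exact absurd ⟨t, v, ne_one ht, hv1, Submonoid.subset_closure ht, hv, rfl⟩ hw_dec
  · intro hw
    refine ⟨ne_one hw, Submonoid.subset_closure hw, ?_⟩
    rintro ⟨u, v, hu1, hv1, hu, -, rfl⟩
    obtain ⟨t, ht, u', -, rfl⟩ := exists_mem_mul_of_mem_closure hu hu1
    have hu'v : u' * v ≠ 1 := fun h => hv1 (mul_eq_one'.1 h).2
    exact hT _ ht _ hw ⟨1, t, u' * v, ne_one ht, Or.inr hu'v, (one_mul t).symm, mul_assoc _ _ _⟩

end OverlapFree

theorem ofList_eq_one_iff {l : List X} : FreeMonoid.ofList l = 1 ↔ l = [] :=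
  FreeMonoid.ofList.injective.eq_iff' rfl

theorem toList_eq_nil_iff {w : FreeMonoid X} : w.toList = [] ↔ w = 1 :=
  FreeMonoid.toList.injective.eq_iff' rfl

theorem overlap_of_toList_eq {u v : FreeMonoid X} {A B C : List X} (hB : B ≠ [])
    (hAC : A ≠ [] ∨ C ≠ []) (hu : u.toList = A ++ B) (hv : v.toList = B ++ C) :
    Overlap u v := by
  refine ⟨.ofList A, .ofList B, .ofList C, by rwa [Ne, ofList_eq_one_iff], by
    simpa only [Ne, ofList_eq_one_iff] using hAC, ?_, ?_⟩
  · rw [← FreeMonoid.ofList_append, ← hu, FreeMonoid.ofList_toList]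
  · rw [← FreeMonoid.ofList_append, ← hv, FreeMonoid.ofList_toList]

theorem eq_append_of_append_map_eq_map {α β : Type*} {f : α → β}
    (hf : Function.Injective f) {δ : List β} {u w : List α} (h : δ ++ w.map f = u.map f) :
    ∃ σ, u = σ ++ w ∧ δ = σ.map f := by
  obtain ⟨σ, w', rfl, hσ, hw'⟩ := List.append_eq_map_iff.1 h
  exact ⟨σ, by rw [(List.map_injective_iff.2 hf) hw'], hσ.symm⟩

section Rewriting

variable (T : Set (FreeMonoid X))

inductive IsRelator : List (X ⊕ T) → Prop
  | mul_inv (t : T) : IsRelator (t.1.toList.map Sum.inl ++ [Sum.inr t])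
  | inv_mul (t : T) : IsRelator (Sum.inr t :: t.1.toList.map Sum.inl)

def Reduced (r : List (X ⊕ T)) : Prop := ∀ l, IsRelator T l → ¬ l <:+: r

def IsPop (r : List (X ⊕ T)) (a : X ⊕ T) (q : List (X ⊕ T)) : Prop :=
  ∃ l, IsRelator T l ∧ r ++ [a] = q ++ l

open Classical in
noncomputable def push (r : List (X ⊕ T)) (a : X ⊕ T) : List (X ⊕ T) :=
  if h : ∃ q, IsPop T r a q then h.choose else r ++ [a]

variable {T}

theorem IsRelator.ne_nil {l : List (X ⊕ T)} (hl : IsRelator T l) : l ≠ [] := by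
  cases hl <;> simp

theorem IsRelator.exists_inr_mem {l : List (X ⊕ T)} (hl : IsRelator T l) :
    ∃ t, Sum.inr t ∈ l := by
  cases hl with
  | mul_inv t => exact ⟨t, by simp⟩
  | inv_mul t => exact ⟨t, by simp⟩

theorem append_map_inl_eq_append_inr_cons {A q C : List (X ⊕ T)} {u : List X} {s : T}
    (h : A ++ u.map Sum.inl = q ++ Sum.inr s :: C) :
    ∃ δ, A = q ++ Sum.inr s :: δ ∧ δ ++ u.map Sum.inl = C := by
  rcases List.append_eq_append_iff.1 h with ⟨m, -, hm⟩ | ⟨m, hA, hm⟩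
  · have : Sum.inr s ∈ u.map (Sum.inl : X → X ⊕ T) := hm ▸ by simp
    simp at this
  · cases m with
    | nil => cases u <;> simp at hm
    | cons x δ =>
      obtain ⟨rfl, hδ⟩ := List.cons_eq_cons.1 hm
      exact ⟨δ, hA, hδ.symm⟩

theorem append_inr_cons_map_inl_inj {q₁ q₂ : List (X ⊕ T)} {s₁ s₂ : T} {u₁ u₂ : List X}
    (h : q₁ ++ Sum.inr s₁ :: u₁.map Sum.inl = q₂ ++ Sum.inr s₂ :: u₂.map Sum.inl) :
    q₁ = q₂ ∧ s₁ = s₂ ∧ u₁ = u₂ := by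
  rw [← List.singleton_append, ← List.append_assoc] at h
  obtain ⟨δ, hq, hδ⟩ := append_map_inl_eq_append_inr_cons h
  obtain ⟨σ, rfl, rfl⟩ := eq_append_of_append_map_eq_map Sum.inl_injective hδ
  rcases List.eq_nil_or_concat' σ with rfl | ⟨σ', b, rfl⟩
  · simpa using hq
  · rw [List.map_append, List.map_singleton, ← List.cons_append, ← List.append_assoc,
      List.append_singleton_inj] at hq
    simp at hq

theorem IsPop.inl {r q : List (X ⊕ T)} {a : X} (h : IsPop T r (Sum.inl a) q) :
    ∃ (s : T) (u : List X), s.1.toList = u ++ [a] ∧ r = q ++ Sum.inr s :: u.map Sum.inl := by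
  obtain ⟨l, hl, hr⟩ := h
  cases hl with
  | mul_inv t => simp [← List.append_assoc] at hr
  | inv_mul s =>
    rcases List.eq_nil_or_concat' s.1.toList with hs | ⟨u, b, hs⟩
    · simp [hs] at hr
    · rw [hs, List.map_append, ← List.cons_append,
        ← List.append_assoc] at hr
      obtain ⟨rfl, hab⟩ := List.append_singleton_inj.1 hr
      obtain rfl : a = b := by simpa using hab
      exact ⟨s, u, hs, rfl⟩

theorem IsPop.inr {r q : List (X ⊕ T)} {t : T} (h : IsPop T r (Sum.inr t) q) :
    r = q ++ t.1.toList.map Sum.inl := by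
  obtain ⟨l, hl, hr⟩ := h
  cases hl with
  | mul_inv s =>
    rw [← List.append_assoc] at hr
    obtain ⟨rfl, hts⟩ := List.append_singleton_inj.1 hr
    obtain rfl : t = s := by simpa using hts
    rfl
  | inv_mul s =>
    rcases List.eq_nil_or_concat' s.1.toList with hs | ⟨u, b, hs⟩
    · rw [hs, List.map_nil] at hr
      obtain ⟨rfl, hts⟩ := List.append_singleton_inj.1 hr
      obtain rfl : t = s := by simpa using hts
      simp [hs]
    · rw [hs, List.map_append, List.map_singleton, ← List.cons_append, ← List.append_assoc,
        List.append_singleton_inj] at hr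
      simp at hr

theorem IsPop.unique {r q₁ q₂ : List (X ⊕ T)} {a : X ⊕ T} (h₁ : IsPop T r a q₁)
    (h₂ : IsPop T r a q₂) : q₁ = q₂ := by
  cases a with
  | inl a =>
    obtain ⟨s₁, u₁, -, hr₁⟩ := h₁.inl
    obtain ⟨s₂, u₂, -, hr₂⟩ := h₂.inl
    exact (append_inr_cons_map_inl_inj (hr₁.symm.trans hr₂)).1
  | inr t => exact List.append_cancel_right (h₁.inr.symm.trans h₂.inr)

theorem push_eq_of_isPop {r q : List (X ⊕ T)} {a : X ⊕ T} (h : IsPop T r a q) :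
    push T r a = q := by
  have hex : ∃ q, IsPop T r a q := ⟨q, h⟩
  rw [push, dif_pos hex]
  exact hex.choose_spec.unique h

theorem push_eq_append {r : List (X ⊕ T)} {a : X ⊕ T} (h : ¬∃ q, IsPop T r a q) :
    push T r a = r ++ [a] := by
  rw [push, dif_neg h]

theorem push_eq_append_or_isPop (r : List (X ⊕ T)) (a : X ⊕ T) :
    push T r a = r ++ [a] ∨ IsPop T r a (push T r a) := by
  by_cases h : ∃ q, IsPop T r a q
  · obtain ⟨q, hq⟩ := h
    exact Or.inr (push_eq_of_isPop hq ▸ hq)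
  · exact Or.inl (push_eq_append h)

theorem push_eq_append_of_reduced {r : List (X ⊕ T)} {a : X ⊕ T} (h : Reduced T (r ++ [a])) :
    push T r a = r ++ [a] :=
  push_eq_append fun ⟨q, l, hl, hr⟩ => h l hl (hr ▸ (List.suffix_append q l).isInfix)

theorem reduced_nil : Reduced T [] := fun _ hl h => hl.ne_nil (List.infix_nil.1 h)

theorem reduced_map_inl (u : List X) : Reduced T (u.map Sum.inl) := fun _ hl h => by
  obtain ⟨t, ht⟩ := hl.exists_inr_mem
  simpa using h.subset ht

theorem reduced_push {r : List (X ⊕ T)} (hr : Reduced T r) (a : X ⊕ T) :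
    Reduced T (push T r a) := by
  by_cases h : ∃ q, IsPop T r a q
  · obtain ⟨q, l, hl, hrq⟩ := h
    rw [push_eq_of_isPop ⟨l, hl, hrq⟩]
    have hq : q <+: r := (List.prefix_concat_iff.1 ⟨l, hrq.symm⟩).resolve_left fun h =>
      hl.ne_nil (by simpa [h] using hrq)
    exact fun l hl hinf => hr l hl (hinf.trans hq.isInfix)
  · rw [push_eq_append h]
    intro l hl hinf
    rcases List.infix_concat_iff.1 hinf with hsuf | hinf
    · obtain ⟨q, hq⟩ := hsuf
      exact h ⟨q, l, hl, hq.symm⟩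
    · exact hr l hl hinf

theorem reduced_foldl_push {r : List (X ⊕ T)} (hr : Reduced T r) (v : List (X ⊕ T)) :
    Reduced T (v.foldl (push T) r) := by
  induction v generalizing r with
  | nil => exact hr
  | cons a v ih => exact ih (reduced_push hr a)

theorem foldl_push_of_reduced {r v : List (X ⊕ T)} (h : Reduced T (r ++ v)) :
    v.foldl (push T) r = r ++ v := by
  induction v generalizing r with
  | nil => simp
  | cons a v ih =>
    rw [← List.singleton_append, ← List.append_assoc] at h
    rw [List.foldl_cons, push_eq_append_of_reduced
      (fun l hl hinf => h l hl (hinf.trans (List.prefix_append _ _).isInfix)), ih h]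
    simp

variable {t : T}

theorem foldl_push_map_inl_of_inr {r : List (X ⊕ T)} {u v : List X} (ht : t.1.toList = u ++ v)
    (hv : v ≠ []) : (v.map Sum.inl).foldl (push T) (r ++ Sum.inr t :: u.map Sum.inl) = r := by
  induction v generalizing u with
  | nil => exact absurd rfl hv
  | cons a v ih =>
    rw [List.map_cons, List.foldl_cons]
    rcases eq_or_ne v [] with rfl | hv
    · rw [push_eq_of_isPop (q := r) ⟨_, .inv_mul t, by simp [ht]⟩]
      rfl
    · have hnp : ¬∃ q, IsPop T (r ++ Sum.inr t :: u.map Sum.inl) (Sum.inl a) q := by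
        rintro ⟨q, hq⟩
        obtain ⟨s, u', hs, hr⟩ := hq.inl
        obtain ⟨-, rfl, rfl⟩ := append_inr_cons_map_inl_inj hr
        rw [ht, List.append_cancel_left_eq, List.cons_eq_cons] at hs
        exact hv hs.2
      rw [push_eq_append hnp]
      simpa using ih (u := u ++ [a]) (by simp [ht]) hv

theorem foldl_push_map_inl_of_not_inr (hT : OverlapFree T) {r : List (X ⊕ T)}
    (hr : ∀ q, r ≠ q ++ [Sum.inr t]) {u v : List X} (ht : t.1.toList = u ++ v) :
    (v.map Sum.inl).foldl (push T) (r ++ u.map Sum.inl) = r ++ t.1.toList.map Sum.inl := by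
  induction v generalizing u with
  | nil => simp [ht]
  | cons a v ih =>
    rw [List.map_cons, List.foldl_cons]
    -- a pop would delete `i(s) σ u a` with `s = σ u a`, which overlaps `t = u a v` unless `s = t`
    have hnp : ¬∃ q, IsPop T (r ++ u.map Sum.inl) (Sum.inl a) q := by
      rintro ⟨q, hq⟩
      obtain ⟨s, u', hs, hru⟩ := hq.inl
      obtain ⟨δ, rfl, hδ⟩ := append_map_inl_eq_append_inr_cons hru
      obtain ⟨σ, rfl, rfl⟩ := eq_append_of_append_map_eq_map Sum.inl_injective hδ
      rw [List.append_assoc] at hs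
      by_cases hσv : σ = [] ∧ v = []
      · obtain ⟨rfl, rfl⟩ := hσv
        obtain rfl : s = t := Subtype.ext (FreeMonoid.toList.injective (by simp [hs, ht]))
        exact hr q (by simp)
      · exact hT _ s.2 _ t.2 (overlap_of_toList_eq (B := u ++ [a]) (by simp)
          (not_and_or.1 hσv) hs (by simp [ht]))
    rw [push_eq_append hnp]
    simpa using ih (u := u ++ [a]) (by simp [ht])

theorem foldl_push_relator (hT : OverlapFree T) {r l : List (X ⊕ T)} (hr : Reduced T r)
    (hl : IsRelator T l) : l.foldl (push T) r = r := by
  cases hl with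
  | mul_inv t =>
    rw [List.foldl_append]
    by_cases h : ∃ q, r = q ++ [Sum.inr t]
    · obtain ⟨q, rfl⟩ := h
      have ht : t.1.toList ≠ [] := fun ht =>
        hr _ (.mul_inv t) (by simpa [ht] using (List.suffix_append q _).isInfix)
      have hpush : (t.1.toList.map Sum.inl).foldl (push T) (q ++ [Sum.inr t]) = q := by
        simpa using foldl_push_map_inl_of_inr (r := q) (u := []) (List.nil_append _).symm ht
      rw [hpush, List.foldl_cons, List.foldl_nil, push_eq_append_of_reduced hr]
    · have hpush : (t.1.toList.map Sum.inl).foldl (push T) r = r ++ t.1.toList.map Sum.inl := by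
        simpa using foldl_push_map_inl_of_not_inr hT (not_exists.1 h) (u := [])
          (List.nil_append _).symm
      rw [hpush, List.foldl_cons, List.foldl_nil,
        push_eq_of_isPop (q := r) ⟨_, .mul_inv t, by simp⟩]
  | inv_mul t =>
    rw [List.foldl_cons]
    by_cases h : ∃ q, r = q ++ t.1.toList.map Sum.inl
    · obtain ⟨q, rfl⟩ := h
      have hq : ∀ q', q ≠ q' ++ [Sum.inr t] := by
        rintro q' rfl
        exact hr _ (.inv_mul t) (by simpa using (List.suffix_append q' (Sum.inr t :: _)).isInfix)
      rw [push_eq_of_isPop (q := q) ⟨_, .mul_inv t, by simp⟩]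
      simpa using foldl_push_map_inl_of_not_inr hT hq (u := []) (List.nil_append _).symm
    · have ht : t.1.toList ≠ [] := fun ht => h ⟨r, by simp [ht]⟩
      rw [push_eq_append fun ⟨q, hq⟩ => h ⟨q, hq.inr⟩]
      simpa using foldl_push_map_inl_of_inr (r := r) (u := []) (List.nil_append _).symm ht

theorem foldl_push_eq_of_invCon (hT : OverlapFree T) {u v : FreeMonoid (X ⊕ T)}
    (h : invCon T u v) {r : List (X ⊕ T)} (hr : Reduced T r) :
    u.toList.foldl (push T) r = v.toList.foldl (push T) r := by
  let c : Con (FreeMonoid (X ⊕ T)) :=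
    { r := fun u v => ∀ r, Reduced T r → u.toList.foldl (push T) r = v.toList.foldl (push T) r
      iseqv := ⟨fun _ _ _ => rfl, fun h r hr => (h r hr).symm,
        fun h₁ h₂ r hr => (h₁ r hr).trans (h₂ r hr)⟩
      mul' := fun h₁ h₂ r hr => by
        simp only [FreeMonoid.toList_mul, List.foldl_append, h₁ r hr,
          h₂ _ (reduced_foldl_push hr _)] }
  refine (Con.conGen_le.2 ?_ : invCon T ≤ c) h r hr
  rintro _ _ (w | w) r hr
  · exact foldl_push_relator hT hr (.mul_inv w)
  · exact foldl_push_relator hT hr (.inv_mul w)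

theorem prefix_foldl_push_or {p r : List (X ⊕ T)} (v : List (X ⊕ T)) (hp : p <+: r) :
    p <+: v.foldl (push T) r ∨
      ∃ m, m ≠ [] ∧ m <:+ p ∧ ∃ l, IsRelator T l ∧ m <+: l := by
  induction v generalizing r with
  | nil => exact Or.inl hp
  | cons a v ih =>
    have hpa := hp.trans (List.prefix_append r [a])
    rcases push_eq_append_or_isPop r a with h | ⟨l, hl, hrl⟩
    · exact ih (h ▸ hpa)
    · rcases List.prefix_or_prefix_of_prefix hpa ⟨l, hrl.symm⟩ with hpq | ⟨m, rfl⟩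
      · exact ih hpq
      rcases eq_or_ne m [] with rfl | hm
      · exact ih (by simp)
      · rw [hrl, List.prefix_append_right_inj] at hpa
        exact Or.inr ⟨m, hm, List.suffix_append _ _, l, hl, hpa⟩

theorem foldl_push_map_inl_or (r : List (X ⊕ T)) (w : List X) :
    (w.map Sum.inl).foldl (push T) r = r ++ w.map Sum.inl ∨
      ∃ (s : T) (σ τ : List X), s.1.toList = σ ++ τ ∧ τ ≠ [] ∧ τ <+: w := by
  induction w using List.reverseRecOn with
  | nil => simp
  | append_singleton w a ih =>
    rcases ih with ih | ⟨s, σ, τ, hs, hτ, hτw⟩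
    · rw [List.map_append, List.foldl_append, ih, List.map_singleton, List.foldl_cons,
        List.foldl_nil]
      rcases push_eq_append_or_isPop (r ++ w.map Sum.inl) (Sum.inl a) with h | h
      · exact Or.inl (by simp [h])
      · obtain ⟨s, u, hs, hru⟩ := h.inl
        obtain ⟨δ, -, hδ⟩ := append_map_inl_eq_append_inr_cons hru
        obtain ⟨σ, rfl, -⟩ := eq_append_of_append_map_eq_map Sum.inl_injective hδ
        exact Or.inr ⟨s, σ, w ++ [a], by simp [hs], by simp, List.prefix_rfl⟩
    · exact Or.inr ⟨s, σ, τ, hs, hτ, hτw.trans (List.prefix_append _ _)⟩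

theorem exists_foldl_push_eq_nil (hT : OverlapFree T) {w : FreeMonoid X}
    (hw : w ∈ invertibles T) :
    ∃ v : List (X ⊕ T), v.foldl (push T) (w.toList.map Sum.inl) = [] ∧
      (w.toList.map Sum.inl).foldl (push T) (v.foldl (push T) []) = [] := by
  obtain ⟨v, hv⟩ := Con.mk'_surjective (c := invCon T) (↑hw.unit⁻¹ : AdjInv T)
  have hwv : invCon T (emb T w * v) 1 := (Con.eq _).1 <|
    show (invCon T).mk' _ = (invCon T).mk' _ by rw [map_mul, map_one, hv]; exact hw.mul_val_inv
  have hvw : invCon T (v * emb T w) 1 := (Con.eq _).1 <|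
    show (invCon T).mk' _ = (invCon T).mk' _ by rw [map_mul, map_one, hv]; exact hw.val_inv_mul
  have hw_red : (w.toList.map Sum.inl).foldl (push T) [] = w.toList.map Sum.inl :=
    foldl_push_of_reduced (reduced_map_inl _)
  refine ⟨v.toList, ?_, ?_⟩
  · simpa [emb, List.foldl_append, hw_red] using foldl_push_eq_of_invCon hT hwv reduced_nil
  · simpa [emb, List.foldl_append] using foldl_push_eq_of_invCon hT hvw reduced_nil

theorem OverlapFree.exists_suffix_mul_mem (hT : OverlapFree T) {w : FreeMonoid X}
    (hw : w ∈ invertibles T) (hw1 : w ≠ 1) :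
    ∃ σ τ w₂, σ * τ ∈ T ∧ τ ≠ 1 ∧ w = τ * w₂ := by
  obtain ⟨v, -, hvw⟩ := exists_foldl_push_eq_nil hT hw
  rcases foldl_push_map_inl_or (v.foldl (push T) []) w.toList
    with h | ⟨s, σ, τ, hs, hτ, w₂, hw₂⟩
  · rw [hvw, eq_comm, List.append_eq_nil_iff, List.map_eq_nil_iff,
      toList_eq_nil_iff] at h
    exact absurd h.2 hw1
  · refine ⟨.ofList σ, .ofList τ, .ofList w₂, ?_, by rwa [Ne, ofList_eq_one_iff], ?_⟩
    · rw [← FreeMonoid.ofList_append, ← hs, FreeMonoid.ofList_toList]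
      exact s.2
    · rw [← FreeMonoid.ofList_append, hw₂, FreeMonoid.ofList_toList]

theorem OverlapFree.exists_prefix_mul_mem (hT : OverlapFree T) {w : FreeMonoid X}
    (hw : w ∈ invertibles T) (hw1 : w ≠ 1) :
    ∃ w₁ α γ, α * γ ∈ T ∧ α ≠ 1 ∧ w = w₁ * α := by
  obtain ⟨v, hwv, -⟩ := exists_foldl_push_eq_nil hT hw
  rcases prefix_foldl_push_or v (List.prefix_refl (w.toList.map Sum.inl))
    with h | ⟨m, hm, hmw, l, hl, hml⟩
  · rw [hwv, List.prefix_nil, List.map_eq_nil_iff, toList_eq_nil_iff] at h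
    exact absurd h hw1
  obtain ⟨α, ⟨w₁, hw₁⟩, rfl⟩ := List.suffix_map_iff.1 hmw
  cases hl with
  | inv_mul t =>
    cases α with
    | nil => exact absurd rfl hm
    | cons x α => simp at hml
  | mul_inv t =>
    rcases List.prefix_concat_iff.1 hml with h | h
    · simpa using congrArg (Sum.inr t ∈ ·) h
    obtain ⟨β, ⟨γ, hγ⟩, hβ⟩ := List.prefix_map_iff.1 h
    obtain rfl := List.map_injective_iff.2 Sum.inl_injective hβ
    refine ⟨.ofList w₁, .ofList α, .ofList γ, ?_, by simpa [ofList_eq_one_iff] using hm, ?_⟩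
    · rw [← FreeMonoid.ofList_append, hγ, FreeMonoid.ofList_toList]
      exact t.2
    · rw [← FreeMonoid.ofList_append, hw₁, FreeMonoid.ofList_toList]

theorem OverlapFree.mem_closure_of_mem_invertibles (hT : OverlapFree T) {w : FreeMonoid X}
    (hw : w ∈ invertibles T) : w ∈ Submonoid.closure T := by
  by_cases hw1 : w = 1
  · exact hw1 ▸ one_mem _
  obtain ⟨σ, τ, w₂, hs, hτ1, hτw⟩ := hT.exists_suffix_mul_mem hw hw1
  have hτ := mem_invertibles_of_mul_mem_of_mul_mem (subset_invertibles hs) (hτw ▸ hw)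
  by_cases hw₂1 : w₂ = 1
  · rw [hw₂1, mul_one] at hτw
    subst hτw
    obtain ⟨w₁, α, γ, ht, hα1, hwα⟩ := hT.exists_prefix_mul_mem hw hw1
    by_cases hw₁1 : w₁ = 1
    · rw [hw₁1, one_mul] at hwα
      subst hwα
      exact Submonoid.subset_closure (hT.mem_of_suffix_of_prefix hs ht hw1)
    · have hα := mem_invertibles_of_mul_mem_of_mul_mem (hwα ▸ hw) (subset_invertibles ht)
      have hw₁ := mem_invertibles_of_mul_mem_right (hwα ▸ hw) hα
      rw [hwα]
      exact mul_mem (hT.mem_closure_of_mem_invertibles hw₁) (Submonoid.subset_closure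
        (hT.mem_of_prefix_mem_closure (hT.mem_closure_of_mem_invertibles hα) ht hα1))
  · have hw₂ := mem_invertibles_of_mul_mem_left (hτw ▸ hw) hτ
    rw [hτw]
    exact mul_mem (Submonoid.subset_closure
      (hT.mem_of_suffix_mem_closure (hT.mem_closure_of_mem_invertibles hτ) hs hτ1))
      (hT.mem_closure_of_mem_invertibles hw₂)
termination_by w.length
decreasing_by
  · exact hwα ▸ length_lt_length_mul_left hα1
  · exact hwα ▸ length_lt_length_mul_right hw₁1
  · exact hτw ▸ length_lt_length_mul_left hw₂1
  · exact hτw ▸ length_lt_length_mul_right hτ1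

theorem OverlapFree.closure_eq_invertibles (hT : OverlapFree T) :
    Submonoid.closure T = invertibles T :=
  le_antisymm (Submonoid.closure_le.2 subset_invertibles) fun _ => hT.mem_closure_of_mem_invertibles

end Rewriting

theorem stmt11_general (X : Type*) (S : Set (FreeMonoid X))
    (D : Set (FreeMonoid X))
    (hD : D = {w : FreeMonoid X | w ≠ 1 ∧ IsUnit (natHom S w) ∧
      ¬∃ u v : FreeMonoid X, u ≠ 1 ∧ v ≠ 1 ∧
        IsUnit (natHom S u) ∧ IsUnit (natHom S v) ∧ w = u * v}) :
    ((1 : FreeMonoid X) ∉ D ∧ OverlapFree D ∧ InvEquiv S D) ∧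
    ∀ T : Set (FreeMonoid X),
      (1 : FreeMonoid X) ∉ T → OverlapFree T → InvEquiv S T → T = D := by
  replace hD : D = indecomposables (invertibles S) := hD
  subst hD
  refine ⟨⟨one_notMem_indecomposables _, overlapFree_indecomposables_invertibles S,
    indecomposables_subset _, fun w hw => ?_⟩, fun T hT1 hT hST => ?_⟩
  · exact Submonoid.closure_le.2 subset_invertibles
      (mem_closure_indecomposables _ (subset_invertibles hw))
  · rw [← hT.indecomposables_closure hT1, hT.closure_eq_invertibles,
      invertibles_eq_of_invEquiv hST]

/-- for finite `S` there is exactly one overlap-free subset of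
`⟨X⟩ \ {1}` inverse-equivalent to `S`, namely the described set `D`. -/
theorem stmt11 (X : Type*) (S : Set (FreeMonoid X)) (hS : S.Finite)
    (D : Set (FreeMonoid X))
    (hD : D = {w : FreeMonoid X | w ≠ 1 ∧ IsUnit (natHom S w) ∧
      ¬∃ u v : FreeMonoid X, u ≠ 1 ∧ v ≠ 1 ∧
        IsUnit (natHom S u) ∧ IsUnit (natHom S v) ∧ w = u * v}) :
    ((1 : FreeMonoid X) ∉ D ∧ OverlapFree D ∧ InvEquiv S D) ∧
    ∀ T : Set (FreeMonoid X),
      (1 : FreeMonoid X) ∉ T → OverlapFree T → InvEquiv S T → T = D :=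
  stmt11_general X S D hD

end AdjoinInverses
end

section
/- Let X be a set and T a subset of X (regarded as a subset of the free monoid ⟨X⟩ via the words of length one). Then ⟨X : i(T)⟩ is isomorphic to the free product, as monoids (the coproduct in the category of monoids), of the free group on T and the free monoid on X\T, via an isomorphism carrying the image of each t ∈ T to the corresponding generator of the free group and the image of each x ∈ X\T to the corresponding generator of the free monoid. -/
/-!
Both monoids have the same universal property: a homomorphism out of either one into a monoid
`M` amounts to a map `X → M` sending `T` into the units of `M`. For `⟨X : i(S)⟩` this holds for
every `S`, since a homomorphism must send the adjoined `i(w)` to the (unique) inverse of the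
image of `w`; for the free product it is the universal property of the free group.
-/

namespace AdjoinInverses

variable {X : Type*}

namespace AdjInv

variable {S : Set (FreeMonoid X)} {M : Type*} [Monoid M]

theorem natHom_mul_invElt (w : S) : natHom S w.1 * invElt S w = 1 :=
  (invCon S).eq.mpr <| ConGen.Rel.of _ _ (InvRel.mul_inv w)

theorem invElt_mul_natHom (w : S) : invElt S w * natHom S w.1 = 1 :=
  (invCon S).eq.mpr <| ConGen.Rel.of _ _ (InvRel.inv_mul w)

theorem isUnit_natHom {w : FreeMonoid X} (hw : w ∈ S) : IsUnit (natHom S w) :=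
  isUnit_iff_exists.mpr ⟨_, natHom_mul_invElt ⟨w, hw⟩, invElt_mul_natHom ⟨w, hw⟩⟩

noncomputable def liftGen (f : FreeMonoid X →* M) (hf : ∀ w ∈ S, IsUnit (f w)) :
    FreeMonoid (X ⊕ S) →* M :=
  FreeMonoid.lift <| Sum.elim (fun x => f (FreeMonoid.of x)) fun w => ↑(hf w.1 w.2).unit⁻¹

theorem liftGen_emb (f : FreeMonoid X →* M) (hf : ∀ w ∈ S, IsUnit (f w)) (w : FreeMonoid X) :
    liftGen f hf (emb S w) = f w :=
  DFunLike.congr_fun (FreeMonoid.hom_eq (f := (liftGen f hf).comp (emb S)) (g := f) fun _ => rfl) w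

theorem invCon_le_ker_liftGen (f : FreeMonoid X →* M) (hf : ∀ w ∈ S, IsUnit (f w)) :
    invCon S ≤ Con.ker (liftGen f hf) := by
  refine Con.conGen_le.mpr ?_
  rintro _ _ (w | w) <;>
    simp only [Con.ker_rel, map_mul, map_one, liftGen_emb] <;>
    simp [igen, liftGen]

noncomputable def lift (f : FreeMonoid X →* M) (hf : ∀ w ∈ S, IsUnit (f w)) : AdjInv S →* M :=
  (invCon S).lift (liftGen f hf) (invCon_le_ker_liftGen f hf)

theorem lift_natHom (f : FreeMonoid X →* M) (hf : ∀ w ∈ S, IsUnit (f w)) (w : FreeMonoid X) :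
    lift f hf (natHom S w) = f w :=
  liftGen_emb f hf w

theorem hom_ext {g h : AdjInv S →* M} (H : g.comp (natHom S) = h.comp (natHom S)) : g = h := by
  have hX (w : FreeMonoid X) : g (natHom S w) = h (natHom S w) := DFunLike.congr_fun H w
  -- `g (i w)` and `h (i w)` are both two-sided inverses of the same element.
  have hS (w : S) : g (invElt S w) = h (invElt S w) := by
    refine left_inv_eq_right_inv (a := h (natHom S w.1)) ?_ ?_
    · rw [← hX, ← map_mul, invElt_mul_natHom, map_one]
    · rw [← map_mul, natHom_mul_invElt, map_one]
  refine Con.hom_ext <| FreeMonoid.hom_eq ?_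
  rintro (x | w)
  exacts [hX (FreeMonoid.of x), hS w]

end AdjInv

section FreeProduct

variable (T₀ : Set X)

open Classical in
noncomputable def letter (x : X) : Monoid.Coprod (FreeGroup T₀) (FreeMonoid {x : X // x ∉ T₀}) :=
  if h : x ∈ T₀ then Monoid.Coprod.inl (FreeGroup.of ⟨x, h⟩)
  else Monoid.Coprod.inr (FreeMonoid.of ⟨x, h⟩)

theorem letter_of_mem (t : T₀) : letter T₀ t.1 = Monoid.Coprod.inl (FreeGroup.of t) :=
  dif_pos t.2

theorem letter_of_notMem (x : {x : X // x ∉ T₀}) :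
    letter T₀ x.1 = Monoid.Coprod.inr (FreeMonoid.of x) :=
  dif_neg x.2

theorem isUnit_lift_letter :
    ∀ w ∈ (FreeMonoid.of '' T₀ : Set (FreeMonoid X)), IsUnit (FreeMonoid.lift (letter T₀) w) := by
  rintro _ ⟨t, ht, rfl⟩
  rw [FreeMonoid.lift_eval_of, letter_of_mem T₀ ⟨t, ht⟩]
  exact (Group.isUnit _).map _

noncomputable def toCoprod :
    AdjInv (FreeMonoid.of '' T₀) →* Monoid.Coprod (FreeGroup T₀) (FreeMonoid {x : X // x ∉ T₀}) :=
  AdjInv.lift (FreeMonoid.lift (letter T₀)) (isUnit_lift_letter T₀)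

theorem toCoprod_natHom_of (x : X) :
    toCoprod T₀ (natHom (FreeMonoid.of '' T₀) (FreeMonoid.of x)) = letter T₀ x := by
  rw [toCoprod, AdjInv.lift_natHom, FreeMonoid.lift_eval_of]

noncomputable def ofCoprod :
    Monoid.Coprod (FreeGroup T₀) (FreeMonoid {x : X // x ∉ T₀}) →* AdjInv (FreeMonoid.of '' T₀) :=
  Monoid.Coprod.lift
    ((Units.coeHom _).comp <| FreeGroup.lift fun t =>
      (AdjInv.isUnit_natHom (S := FreeMonoid.of '' T₀) ⟨t.1, t.2, rfl⟩).unit)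
    (FreeMonoid.lift fun x => natHom _ (FreeMonoid.of x.1))

theorem ofCoprod_letter (x : X) :
    ofCoprod T₀ (letter T₀ x) = natHom (FreeMonoid.of '' T₀) (FreeMonoid.of x) := by
  by_cases hx : x ∈ T₀ <;> simp [letter, hx, ofCoprod]

theorem ofCoprod_comp_toCoprod : (ofCoprod T₀).comp (toCoprod T₀) = MonoidHom.id _ :=
  AdjInv.hom_ext <| FreeMonoid.hom_eq fun x => by
    simp [toCoprod_natHom_of, ofCoprod_letter]

theorem toCoprod_comp_ofCoprod : (toCoprod T₀).comp (ofCoprod T₀) = MonoidHom.id _ := by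
  refine Monoid.Coprod.hom_ext (FreeGroup.ext_hom _ _ fun t => ?_) (FreeMonoid.hom_eq fun x => ?_)
  all_goals simp only [MonoidHom.comp_apply, MonoidHom.id_apply]
  · rw [← letter_of_mem, ofCoprod_letter, toCoprod_natHom_of]
  · rw [← letter_of_notMem, ofCoprod_letter, toCoprod_natHom_of]

end FreeProduct

/-- for `T ⊆ X`, the monoid `⟨X : i(T)⟩` is the coproduct (free product
as monoids) of the free group on `T` and the free monoid on `X \ T`. -/
theorem stmt12 (X : Type*) (T₀ : Set X) :
    ∃ φ : AdjInv (FreeMonoid.of '' T₀ : Set (FreeMonoid X)) ≃*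
        Monoid.Coprod (FreeGroup T₀) (FreeMonoid {x : X // x ∉ T₀}),
      (∀ t : T₀, φ (natHom (FreeMonoid.of '' T₀) (FreeMonoid.of t.1)) =
        Monoid.Coprod.inl (FreeGroup.of t)) ∧
      (∀ x : {x : X // x ∉ T₀}, φ (natHom (FreeMonoid.of '' T₀) (FreeMonoid.of x.1)) =
        Monoid.Coprod.inr (FreeMonoid.of x)) :=
  ⟨(toCoprod T₀).toMulEquiv (ofCoprod T₀) (ofCoprod_comp_toCoprod T₀) (toCoprod_comp_ofCoprod T₀),
    fun t => (toCoprod_natHom_of T₀ t.1).trans (letter_of_mem T₀ t),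
    fun x => (toCoprod_natHom_of T₀ x.1).trans (letter_of_notMem T₀ x)⟩

end AdjoinInverses
end

section
/- Let X be a set, M a monoid, and f : ⟨X⟩ → M a monoid homomorphism. Let N = {w ∈ ⟨X⟩ : f(w) is invertible in M} (a submonoid of ⟨X⟩), and let T be the set of elements of N\{1} that cannot be written as a product of two nonidentity elements of N. Then T is an overlap-free subset of ⟨X⟩\{1}, and N is a free submonoid of ⟨X⟩ with free generating set T; that is, every element of N can be written uniquely as a product of elements of T. -/
namespace AdjoinInverses

variable {X : Type*}

private lemma unit_right {M : Type*} [Monoid M] {a b : M} (ha : IsUnit a)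
    (hab : IsUnit (a * b)) : IsUnit b := by
  obtain ⟨u, hu⟩ := ha
  have : b = ↑u⁻¹ * (a * b) := by rw [← hu, ← mul_assoc, u.inv_mul, one_mul]
  rw [this]; exact (Units.isUnit _).mul hab

private lemma unit_left {M : Type*} [Monoid M] {a b : M} (hb : IsUnit b)
    (hab : IsUnit (a * b)) : IsUnit a := by
  obtain ⟨u, hu⟩ := hb
  have : a = (a * b) * ↑u⁻¹ := by rw [← hu, mul_assoc, u.mul_inv, mul_one]
  rw [this]; exact hab.mul (Units.isUnit _)

private lemma unit_mid {M : Type*} [Monoid M] {a b c : M} (hab : IsUnit (a * b))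
    (hbc : IsUnit (b * c)) : IsUnit b := by
  obtain ⟨u, hu⟩ := hab
  obtain ⟨v, hv⟩ := hbc
  have hxb : (↑u⁻¹ * a) * b = 1 := by rw [mul_assoc, ← hu, u.inv_mul]
  have hby : b * (c * ↑v⁻¹) = 1 := by rw [← mul_assoc, ← hv, v.mul_inv]
  have hyx : (c * ↑v⁻¹) * b = 1 := by
    have : (↑u⁻¹ * a) = (c * ↑v⁻¹) := by
      calc (↑u⁻¹ * a) = (↑u⁻¹ * a) * (b * (c * ↑v⁻¹)) := by rw [hby, mul_one]
        _ = ((↑u⁻¹ * a) * b) * (c * ↑v⁻¹) := by simp only [mul_assoc]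
        _ = (c * ↑v⁻¹) := by rw [hxb, one_mul]
    rw [← this]; exact hxb
  exact ⟨⟨b, c * ↑v⁻¹, hby, hyx⟩, rfl⟩

private lemma fm_mul_eq_one {a b : FreeMonoid X} (h : a * b = 1) : a = 1 ∧ b = 1 := by
  have h' : a.toList ++ b.toList = [] := congrArg FreeMonoid.toList h
  rcases List.append_eq_nil_iff.mp h' with ⟨h1, h2⟩
  exact ⟨FreeMonoid.toList.injective h1, FreeMonoid.toList.injective h2⟩

private lemma fm_split {a b c d : FreeMonoid X} (h : a * b = c * d) :
    (∃ s, c = a * s ∧ b = s * d) ∨ (∃ s, a = c * s ∧ d = s * b) := by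
  have h' : a.toList ++ b.toList = c.toList ++ d.toList := congrArg FreeMonoid.toList h
  rcases List.append_eq_append_iff.mp h' with ⟨s, h1, h2⟩ | ⟨s, h1, h2⟩
  · exact Or.inl ⟨FreeMonoid.ofList s,
      FreeMonoid.toList.injective h1, FreeMonoid.toList.injective h2⟩
  · exact Or.inr ⟨FreeMonoid.ofList s,
      FreeMonoid.toList.injective h1, FreeMonoid.toList.injective h2⟩

/-- for any homomorphism `f : ⟨X⟩ → M`, the set `N` of elements with
invertible image is a free submonoid of `⟨X⟩`, freely generated by the overlap-free
set `T` of its nonidentity elements admitting no nontrivial factorization in `N`. -/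
theorem stmt16 (X : Type*) (M : Type*) [Monoid M] (f : FreeMonoid X →* M)
    (N T : Set (FreeMonoid X))
    (hN : N = {w : FreeMonoid X | IsUnit (f w)})
    (hT : T = {w : FreeMonoid X | w ∈ N ∧ w ≠ 1 ∧
      ¬∃ u v : FreeMonoid X, u ∈ N ∧ v ∈ N ∧ u ≠ 1 ∧ v ≠ 1 ∧ w = u * v}) :
    ((1 : FreeMonoid X) ∉ T ∧ OverlapFree T) ∧
    ∀ w ∈ N, ∃! l : List (FreeMonoid X), (∀ x ∈ l, x ∈ T) ∧ l.prod = w := by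
  subst hN hT
  constructor
  · constructor
    · intro h
      exact h.2.1 rfl
    · rintro u hu v hv ⟨a, b, c, hb1, hac, rfl, rfl⟩
      simp only [Set.mem_setOf_eq] at hu hv
      have hab : IsUnit (f a * f b) := by rw [← map_mul]; exact hu.1
      have hbc : IsUnit (f b * f c) := by rw [← map_mul]; exact hv.1
      have hfb := unit_mid hab hbc
      have hfa := unit_left hfb hab
      have hfc := unit_right hfb hbc
      rcases hac with ha | hc
      · exact hu.2.2 ⟨a, b, hfa, hfb, ha, hb1, rfl⟩
      · exact hv.2.2 ⟨b, c, hfb, hfc, hb1, hc, rfl⟩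
  · have exist : ∀ n (w : FreeMonoid X), w.length ≤ n → IsUnit (f w) →
        ∃ l : List (FreeMonoid X),
          (∀ x ∈ l, x ∈ {w : FreeMonoid X | IsUnit (f w) ∧ w ≠ 1 ∧
            ¬∃ u v : FreeMonoid X, IsUnit (f u) ∧ IsUnit (f v) ∧ u ≠ 1 ∧ v ≠ 1 ∧ w = u * v}) ∧
          l.prod = w := by
      intro n
      induction n with
      | zero =>
        intro w hw _
        have : w = 1 := FreeMonoid.length_eq_zero.mp (Nat.le_zero.mp hw)
        exact ⟨[], by simp, by simp [this]⟩
      | succ n ih =>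
        intro w hw hwu
        by_cases h1 : w = 1
        · exact ⟨[], by simp, by simp [h1]⟩
        by_cases hwT : ∃ u v : FreeMonoid X,
            IsUnit (f u) ∧ IsUnit (f v) ∧ u ≠ 1 ∧ v ≠ 1 ∧ w = u * v
        · obtain ⟨u, v, hu, hv, hu1, hv1, rfl⟩ := hwT
          have hlen : u.length + v.length ≤ n + 1 := by
            rw [← FreeMonoid.length_mul]; exact hw
          have hu0 : u.length ≠ 0 := fun h => hu1 (FreeMonoid.length_eq_zero.mp h)
          have hv0 : v.length ≠ 0 := fun h => hv1 (FreeMonoid.length_eq_zero.mp h)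
          obtain ⟨l1, hl1, hp1⟩ := ih u (by omega) hu
          obtain ⟨l2, hl2, hp2⟩ := ih v (by omega) hv
          refine ⟨l1 ++ l2, ?_, by simp [hp1, hp2]⟩
          intro x hx
          rcases List.mem_append.mp hx with h | h
          · exact hl1 x h
          · exact hl2 x h
        · refine ⟨[w], ?_, by simp⟩
          intro x hx
          simp only [List.mem_singleton] at hx
          subst hx
          exact ⟨hwu, h1, hwT⟩
    have uniq : ∀ l l' : List (FreeMonoid X),
        (∀ x ∈ l, x ∈ {w : FreeMonoid X | IsUnit (f w) ∧ w ≠ 1 ∧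
          ¬∃ u v : FreeMonoid X, IsUnit (f u) ∧ IsUnit (f v) ∧ u ≠ 1 ∧ v ≠ 1 ∧ w = u * v}) →
        (∀ x ∈ l', x ∈ {w : FreeMonoid X | IsUnit (f w) ∧ w ≠ 1 ∧
          ¬∃ u v : FreeMonoid X, IsUnit (f u) ∧ IsUnit (f v) ∧ u ≠ 1 ∧ v ≠ 1 ∧ w = u * v}) →
        l.prod = l'.prod → l = l' := by
      intro l
      induction l with
      | nil =>
        intro l' _ hl' hp
        cases l' with
        | nil => rfl
        | cons t r =>
          exfalso
          simp only [List.prod_nil, List.prod_cons] at hp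
          exact (hl' t (by simp)).2.1 (fm_mul_eq_one hp.symm).1
      | cons t r ihr =>
        intro l' hl hl' hp
        cases l' with
        | nil =>
          exfalso
          simp only [List.prod_nil, List.prod_cons] at hp
          exact (hl t (by simp)).2.1 (fm_mul_eq_one hp).1
        | cons t' r' =>
          simp only [List.prod_cons] at hp
          have hlr : ∀ x ∈ r, x ∈ _ := fun x hx => hl x (List.mem_cons_of_mem _ hx)
          have hlr' : ∀ x ∈ r', x ∈ _ := fun x hx => hl' x (List.mem_cons_of_mem _ hx)
          have ht := hl t (by simp)
          have ht' := hl' t' (by simp)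
          rcases fm_split hp with ⟨s, hs1, hs2⟩ | ⟨s, hs1, hs2⟩
          · by_cases hs : s = 1
            · subst hs
              rw [mul_one] at hs1
              rw [one_mul] at hs2
              rw [hs1, ihr r' hlr hlr' hs2]
            · exfalso
              have hfs : IsUnit (f s) :=
                unit_right ht.1 (by rw [← map_mul, ← hs1]; exact ht'.1)
              exact ht'.2.2 ⟨t, s, ht.1, hfs, ht.2.1, hs, hs1⟩
          · by_cases hs : s = 1
            · subst hs
              rw [mul_one] at hs1
              rw [one_mul] at hs2
              rw [hs1, ihr r' hlr hlr' hs2.symm]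
            · exfalso
              have hfs : IsUnit (f s) :=
                unit_right ht'.1 (by rw [← map_mul, ← hs1]; exact ht.1)
              exact ht.2.2 ⟨t', s, ht'.1, hfs, ht'.2.1, hs, hs1⟩
    intro w hw
    obtain ⟨l, hl, hp⟩ := exist w.length w le_rfl hw
    exact ⟨l, ⟨hl, hp⟩, fun l' h => uniq l' l h.1 hl (h.2.trans hp.symm)⟩


end AdjoinInverses
end

section
/- Let X be a set, S an arbitrary subset of the free monoid ⟨X⟩, and w a nonidentity element of ⟨X⟩. Then the following conditions are equivalent: (i) w becomes invertible in ⟨X : i(S)⟩, but w is not a product of two nonidentity elements of ⟨X⟩ that become invertible in ⟨X : i(S)⟩; (ii) w becomes invertible in ⟨X : i(S)⟩, but w has no proper nonidentity left divisor in ⟨X⟩ that becomes left invertible in ⟨X : i(S)⟩; (ii') w becomes invertible in ⟨X : i(S)⟩, but w has no proper nonidentity right divisor in ⟨X⟩ that becomes right invertible in ⟨X : i(S)⟩. -/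
namespace AdjoinInverses

variable {X : Type*}

private lemma isUnit_of_left_right {M : Type*} [Monoid M] {a l r : M}
    (hl : l * a = 1) (hr : a * r = 1) : IsUnit a := by
  have hlr : l = r := by rw [← one_mul r, ← hl, mul_assoc, hr, mul_one]
  exact ⟨⟨a, r, hr, hlr ▸ hl⟩, rfl⟩

/-- equivalence of conditions (i), (ii), (ii') characterizing the
elements of the overlap-free set associated with an arbitrary `S`. -/
theorem stmt18 (X : Type*) (S : Set (FreeMonoid X)) (w : FreeMonoid X) (hw : w ≠ 1) :
    ((IsUnit (natHom S w) ∧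
        ¬∃ u v : FreeMonoid X, u ≠ 1 ∧ v ≠ 1 ∧
          IsUnit (natHom S u) ∧ IsUnit (natHom S v) ∧ w = u * v) ↔
      (IsUnit (natHom S w) ∧
        ¬∃ u a : FreeMonoid X, u ≠ 1 ∧ a ≠ 1 ∧ w = u * a ∧
          ∃ v, v * natHom S u = 1)) ∧
    ((IsUnit (natHom S w) ∧
        ¬∃ u v : FreeMonoid X, u ≠ 1 ∧ v ≠ 1 ∧
          IsUnit (natHom S u) ∧ IsUnit (natHom S v) ∧ w = u * v) ↔
      (IsUnit (natHom S w) ∧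
        ¬∃ u b : FreeMonoid X, u ≠ 1 ∧ b ≠ 1 ∧ w = b * u ∧
          ∃ v, natHom S u * v = 1)) := by
  constructor
  · constructor
    · rintro ⟨hwu, hns⟩
      refine ⟨hwu, ?_⟩
      rintro ⟨u, a, hu, ha, hwe, v, hv⟩
      apply hns
      have hmul : IsUnit (natHom S u * natHom S a) := by
        rw [← map_mul, ← hwe]; exact hwu
      obtain ⟨z, hz⟩ := hmul
      have hr : natHom S u * (natHom S a * ↑z⁻¹) = 1 := by
        rw [← mul_assoc, ← hz, Units.mul_inv]
      have hu1 : IsUnit (natHom S u) := isUnit_of_left_right hv hr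
      have ha1 : IsUnit (natHom S a) := by
        have : natHom S a = ↑hu1.unit⁻¹ * (natHom S u * natHom S a) := by
          rw [← mul_assoc, IsUnit.val_inv_mul, one_mul]
        rw [this, ← hz]
        exact (hu1.unit⁻¹).isUnit.mul z.isUnit
      exact ⟨u, a, hu, ha, hu1, ha1, hwe⟩
    · rintro ⟨hwu, hns⟩
      refine ⟨hwu, ?_⟩
      rintro ⟨u, v, hu, hv, hu1, hv1, hwe⟩
      exact hns ⟨u, v, hu, hv, hwe, ↑hu1.unit⁻¹, IsUnit.val_inv_mul hu1⟩
  · constructor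
    · rintro ⟨hwu, hns⟩
      refine ⟨hwu, ?_⟩
      rintro ⟨u, b, hu, hb, hwe, v, hv⟩
      apply hns
      have hmul : IsUnit (natHom S b * natHom S u) := by
        rw [← map_mul, ← hwe]; exact hwu
      obtain ⟨z, hz⟩ := hmul
      have hl : (↑z⁻¹ * natHom S b) * natHom S u = 1 := by
        rw [mul_assoc, ← hz, Units.inv_mul]
      have hu1 : IsUnit (natHom S u) := isUnit_of_left_right hl hv
      have hb1 : IsUnit (natHom S b) := by
        have : natHom S b = (natHom S b * natHom S u) * ↑hu1.unit⁻¹ := by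
          rw [mul_assoc, IsUnit.mul_val_inv, mul_one]
        rw [this, ← hz]
        exact z.isUnit.mul (hu1.unit⁻¹).isUnit
      exact ⟨b, u, hb, hu, hb1, hu1, hwe⟩
    · rintro ⟨hwu, hns⟩
      refine ⟨hwu, ?_⟩
      rintro ⟨u, v, hu, hv, hu1, hv1, hwe⟩
      exact hns ⟨v, u, hv, hu, hwe, ↑hv1.unit⁻¹, IsUnit.mul_val_inv hv1⟩


end AdjoinInverses
end
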